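/- arXiv:cs/0607025 — 2 statements merged into one kernel-verified Lean document; each statement's English description precedes it below -/
import Mathlib

section
/- If the random shortcut configuration on the directed n-cycle is chosen from a translation-invariant distribution, then the hitting probability h(x) of greedy routing to vertex 0 is non-increasing in x for 1 ≤ x ≤ n-1. -/
/-!
Translating a realization by `-1` (every vertex and every shortcut endpoint moves one step
toward `0`) commutes with greedy routing as long as the walk stays at distance at least `2`
from `0`: the shortcut-versus-base-edge comparison is unchanged because both candidates lose
exactly one unit of distance. Hence a walk from `y` that hits `x + 1` becomes, in the
translated configuration, a walk from `y - 1` that hits `x`. The translation is a bijection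
of starting vertices and, by rotation invariance, preserves the law of the configuration, so
`h (x + 1) ≤ h x`.
-/

open Finset
open scoped Classical

/-- One greedy routing step toward destination `0` on the directed `n`-cycle with
shortcut configuration `E`: from `v ≠ 0` move to whichever of the shortcut endpoint
`E v` and the base-edge successor `v - 1` is closer to `0` (never overshooting). -/
def gstep (n : ℕ) [NeZero n] (E : ZMod n → ZMod n) (v : ZMod n) : ZMod n :=
  if v = 0 then 0 else if (E v).val < (v - 1).val then E v else v - 1

/-- The greedy walk from `y` toward `0` passes through `x`. -/
def hits (n : ℕ) [NeZero n] (E : ZMod n → ZMod n) (y x : ZMod n) : Prop :=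
  ∃ t ≤ n, (gstep n E)^[t] y = x

/-- Hitting probability of `x` for a query to `0` from a uniform start, when the shortcut
configuration is drawn with probability weights `w`. -/
noncomputable def hitProb (n : ℕ) [NeZero n] (w : (ZMod n → ZMod n) → ℝ)
    (x : ZMod n) : ℝ :=
  ∑ E : ZMod n → ZMod n, w E *
    ((∑ y : ZMod n, if hits n E y x then (1 : ℝ) else 0) / n)

namespace ZMod

variable {n : ℕ} [NeZero n]

lemma val_sub_one_of_ne_zero {v : ZMod n} (hv : v ≠ 0) : (v - 1).val = v.val - 1 := by
  have : Nontrivial (ZMod n) := nontrivial_of_ne v 0 hv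
  have : Fact (1 < n) := ⟨by have := nontrivial_iff.mp this; have := NeZero.ne n; omega⟩
  rw [val_sub (by rw [val_one]; exact val_pos.mpr hv), val_one]

lemma val_sub_one_lt_val_sub_one_iff {a b : ZMod n} (ha : a ≠ 0) (hb : b ≠ 0) :
    (a - 1).val < (b - 1).val ↔ a.val < b.val := by
  have := val_pos.mpr ha
  rw [val_sub_one_of_ne_zero ha, val_sub_one_of_ne_zero hb]
  omega

end ZMod

section GreedyRouting

variable {n : ℕ}

def configShift : (ZMod n → ZMod n) ≃ (ZMod n → ZMod n) where
  toFun E v := E (v + 1) - 1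
  invFun E v := E (v - 1) + 1
  left_inv E := by funext v; simp
  right_inv E := by funext v; simp

@[simp]
lemma configShift_apply (E : ZMod n → ZMod n) (v : ZMod n) :
    configShift E v = E (v + 1) - 1 := rfl

variable [NeZero n]

lemma val_gstep_le (E : ZMod n → ZMod n) (v : ZMod n) : (gstep n E v).val ≤ v.val := by
  by_cases hv : v = 0
  · simp [gstep, hv]
  · have : (v - 1).val ≤ v.val := by rw [ZMod.val_sub_one_of_ne_zero hv]; omega
    unfold gstep
    split_ifs <;> omega

lemma val_iterate_gstep_le (E : ZMod n → ZMod n) (t : ℕ) (v : ZMod n) :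
    ((gstep n E)^[t] v).val ≤ v.val := by
  induction t with
  | zero => rfl
  | succ t ih =>
    rw [Function.iterate_succ_apply']
    exact (val_gstep_le E _).trans ih

lemma gstep_configShift (E : ZMod n → ZMod n) {v : ZMod n} (hv : 2 ≤ (gstep n E v).val) :
    gstep n (configShift E) (v - 1) = gstep n E v - 1 := by
  have hv0 : v ≠ 0 := by rintro rfl; simp [gstep] at hv
  have hvals : 2 ≤ (E v).val ∧ 2 ≤ (v - 1).val := by
    simp only [gstep, if_neg hv0] at hv
    split_ifs at hv <;> omega
  have hEv : E v ≠ 0 := by rintro h; simp [h] at hvals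
  have hv1 : v - 1 ≠ 0 := by rintro h; simp [h] at hvals
  simp only [gstep, if_neg hv0, if_neg hv1, configShift_apply, sub_add_cancel,
    ZMod.val_sub_one_lt_val_sub_one_iff hEv hv1]
  split_ifs <;> rfl

lemma iterate_gstep_configShift (E : ZMod n → ZMod n) (t : ℕ) (y : ZMod n)
    (h : 2 ≤ ((gstep n E)^[t] y).val) :
    (gstep n (configShift E))^[t] (y - 1) = (gstep n E)^[t] y - 1 := by
  induction t generalizing y with
  | zero => rfl
  | succ t ih =>
    simp only [Function.iterate_succ_apply] at h ⊢
    rw [gstep_configShift E (h.trans (val_iterate_gstep_le E t _)), ih _ h]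

lemma hits.configShift {E : ZMod n → ZMod n} {y z : ZMod n} (h : hits n E y z)
    (hz : 2 ≤ z.val) : hits n (configShift E) (y - 1) (z - 1) := by
  obtain ⟨t, ht, rfl⟩ := h
  exact ⟨t, ht, iterate_gstep_configShift E t y hz⟩

lemma card_hits_le_card_hits_configShift (E : ZMod n → ZMod n) {z : ZMod n} (hz : 2 ≤ z.val) :
    #{y | hits n E y z} ≤ #{y | hits n (configShift E) y (z - 1)} :=
  card_le_card_of_injOn (· - 1)
    (fun y hy => by simpa using (mem_filter.mp hy).2.configShift hz)
    (fun _ _ _ _ h => sub_left_injective h)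

lemma hitProb_le_hitProb_sub_one (w : (ZMod n → ZMod n) → ℝ) (hw0 : ∀ E, 0 ≤ w E)
    (hinv : ∀ E : ZMod n → ZMod n, w (fun x => E (x - 1) + 1) = w E)
    {z : ZMod n} (hz : 2 ≤ z.val) : hitProb n w z ≤ hitProb n w (z - 1) := by
  have hw_shift (E : ZMod n → ZMod n) : w (configShift E) = w E :=
    (hinv (configShift E)).symm.trans (congrArg w (configShift.symm_apply_apply E))
  unfold hitProb
  calc ∑ E, w E * ((∑ y, if hits n E y z then (1 : ℝ) else 0) / n)
      ≤ ∑ E, w E * ((∑ y, if hits n (configShift E) y (z - 1) then (1 : ℝ) else 0) / n) := by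
        refine sum_le_sum fun E _ => ?_
        gcongr w E * (?_ / _)
        · exact hw0 E
        · simp only [sum_boole]
          exact_mod_cast card_hits_le_card_hits_configShift E hz
    _ = ∑ E, w (configShift E) *
          ((∑ y, if hits n (configShift E) y (z - 1) then (1 : ℝ) else 0) / n) := by
        simp only [hw_shift]
    _ = ∑ E, w E * ((∑ y, if hits n E y (z - 1) then (1 : ℝ) else 0) / n) :=
        configShift.sum_comp (fun E => w E * ((∑ y, if hits n E y (z - 1) then 1 else 0) / n))

end GreedyRouting

theorem hitProb_nonincreasing_general (n : ℕ) [NeZero n]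
    (w : (ZMod n → ZMod n) → ℝ)
    (hw0 : ∀ E, 0 ≤ w E)
    (hinv : ∀ E : ZMod n → ZMod n, w (fun x => E (x - 1) + 1) = w E) :
    ∀ x : ℕ, 1 ≤ x → x + 1 ≤ n - 1 →
      hitProb n w ((x + 1 : ℕ) : ZMod n) ≤ hitProb n w ((x : ℕ) : ZMod n) := by
  intro x hx1 hxn
  have hval : ((x + 1 : ℕ) : ZMod n).val = x + 1 := ZMod.val_cast_of_lt (by omega)
  have hsub : ((x + 1 : ℕ) : ZMod n) - 1 = x := by push_cast; ring
  simpa only [hsub] using hitProb_le_hitProb_sub_one w hw0 hinv (z := ((x + 1 : ℕ) : ZMod n))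
    (by omega)

/-- If the law of the shortcut configuration is invariant under the rotation
`x ↦ x + 1` (applied simultaneously to all shortcut endpoints), then the hitting
probability `h x` of greedy routing to `0` is non-increasing for `1 ≤ x ≤ n - 1`. -/
theorem hitProb_nonincreasing (n : ℕ) [NeZero n] (hn : 2 ≤ n)
    (w : (ZMod n → ZMod n) → ℝ)
    (hw0 : ∀ E, 0 ≤ w E) (hw1 : ∑ E : ZMod n → ZMod n, w E = 1)
    (hinv : ∀ E : ZMod n → ZMod n, w (fun x => E (x - 1) + 1) = w E) :
    ∀ x : ℕ, 1 ≤ x → x + 1 ≤ n - 1 →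
      hitProb n w ((x + 1 : ℕ) : ZMod n) ≤ hitProb n w ((x : ℕ) : ZMod n) :=
  hitProb_nonincreasing_general n w hw0 hinv
end

section
/- Let N = 2^k with k ≥ 4. Suppose each vertex of the directed N-cycle independently has one shortcut drawn from a balanced distribution ℓ (i.e., ℓ(x) proportional to the hitting probability h(x)). Then the expected greedy routing time τ from a uniform start to a fixed destination satisfies τ ≤ 3k². -/
set_option maxHeartbeats 1000000

open Finset

/-- The backwards equations for the hitting probabilities of greedy routing to `0`
on the directed `N`-cycle with independent shortcuts of length distribution `ℓ`. -/
def BackEq (n : ℕ) (ℓ h : ℕ → ℝ) : Prop :=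
  h (n - 1) = 1 / ((n : ℝ) - 1) ∧
    ∀ x, 1 ≤ x → x ≤ n - 2 →
      h x = (∑ ξ ∈ Ioc x (n - 1), h ξ * ℓ (ξ - x))
        + h (x + 1) * (∑ ξ ∈ Ioc (x + 1) (n - 1), ℓ ξ) + 1 / ((n : ℝ) - 1)

section Aux

variable {N : ℕ} {ℓ h : ℕ → ℝ}

/-- positivity of τ -/
lemma tau_pos (hN16 : 16 ≤ N)
    (hl0 : ∀ x, 0 ≤ ℓ x)
    (hsum : ∑ x ∈ Icc 1 (N - 1), ℓ x = 1)
    (hbe : BackEq N ℓ h)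
    (hbal : ∀ x ∈ Icc 1 (N - 1), ℓ x = h x / ∑ ξ ∈ Icc 1 (N - 1), h ξ) :
    0 < ∑ ξ ∈ Icc 1 (N - 1), h ξ := by
  set τ := ∑ ξ ∈ Icc 1 (N - 1), h ξ with hτdef
  have hNmem : N - 1 ∈ Icc 1 (N - 1) := by simp; omega
  have hτne : τ ≠ 0 := by
    intro h0
    have : ∀ x ∈ Icc 1 (N - 1), ℓ x = 0 := by
      intro x hx; rw [hbal x hx, h0, div_zero]
    rw [Finset.sum_congr rfl this, Finset.sum_const_zero] at hsum
    norm_num at hsum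
  have hNR : (1:ℝ) ≤ (N:ℝ) - 1 := by
    have : (16:ℝ) ≤ (N:ℝ) := by exact_mod_cast hN16
    linarith
  have hhN : 0 < h (N - 1) := by
    rw [hbe.1]; positivity
  have hb := hbal (N - 1) hNmem
  rcases lt_trichotomy τ 0 with ht | ht | ht
  · exfalso
    have : h (N - 1) = ℓ (N - 1) * τ := by
      rw [hb]; field_simp
    nlinarith [hl0 (N - 1)]
  · exact absurd ht hτne
  · exact ht

end Aux

section Aux2

variable {N : ℕ} {ℓ h : ℕ → ℝ}

lemma h_step (hN16 : 16 ≤ N)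
    (hl0 : ∀ x, 0 ≤ ℓ x)
    (hbe : BackEq N ℓ h)
    (hpos : ∀ x ∈ Icc 1 (N - 1), 0 ≤ h x) :
    ∀ x, 1 ≤ x → x ≤ N - 2 → h (x + 1) ≤ h x := by
  have hNR : (1:ℝ) ≤ (N:ℝ) - 1 := by
    have : (16:ℝ) ≤ (N:ℝ) := by exact_mod_cast hN16
    linarith
  have hhN : 0 < h (N - 1) := by rw [hbe.1]; positivity
  -- base case : x = N - 2
  have hbase : h (N - 1) ≤ h (N - 2) := by
    have e := hbe.2 (N - 2) (by omega) le_rfl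
    have h1 : Ioc (N - 2) (N - 1) = {N - 1} := by ext a; simp; omega
    have h2 : Ioc (N - 2 + 1) (N - 1) = ∅ := by
      have : N - 2 + 1 = N - 1 := by omega
      rw [this, Finset.Ioc_self]
    rw [h1, h2] at e
    simp at e
    have hNe : h (N - 1) = ((N:ℝ) - 1)⁻¹ := by rw [hbe.1, one_div]
    nlinarith [mul_nonneg hhN.le (hl0 (N - 1 - (N - 2)))]
  -- fuel induction
  suffices H : ∀ t : ℕ, ∀ x, 1 ≤ x → x ≤ N - 2 → N - 2 - x ≤ t → h (x + 1) ≤ h x by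
    intro x h1 h2; exact H (N - 2 - x) x h1 h2 le_rfl
  intro t
  induction t with
  | zero =>
    intro x h1 h2 h3
    have hx : x = N - 2 := by omega
    subst hx
    have : N - 2 + 1 = N - 1 := by omega
    rw [this]; exact hbase
  | succ t ih =>
    intro x h1 h2 h3
    by_cases hx : x = N - 2
    · subst hx
      have : N - 2 + 1 = N - 1 := by omega
      rw [this]; exact hbase
    · have hx3 : x ≤ N - 3 := by omega
      have e1 := hbe.2 x h1 h2
      have e2 := hbe.2 (x + 1) (by omega) (by omega)
      have ihy : ∀ y, x < y → y ≤ N - 2 → h (y + 1) ≤ h y := by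
        intro y hy1 hy2; exact ih y (by omega) hy2 (by omega)
      -- split S1
      have hS1 : ∑ ξ ∈ Ioc x (N - 1), h ξ * ℓ (ξ - x)
          = (∑ ξ ∈ Ioc x (N - 2), h ξ * ℓ (ξ - x)) + h (N - 1) * ℓ (N - 1 - x) := by
        have hN1 : N - 1 = (N - 2) + 1 := by omega
        rw [hN1, Finset.sum_Ioc_succ_top (by omega : x ≤ N - 2)]
      -- reindex S2
      have hS2 : ∑ ξ ∈ Ioc (x + 1) (N - 1), h ξ * ℓ (ξ - (x + 1))
          = ∑ η ∈ Ioc x (N - 2), h (η + 1) * ℓ (η - x) := by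
        refine Finset.sum_nbij' (fun ξ => ξ - 1) (fun η => η + 1) ?_ ?_ ?_ ?_ ?_
        · intro a ha; simp at ha ⊢; omega
        · intro a ha; simp at ha ⊢; omega
        · intro a ha; simp at ha; show a - 1 + 1 = a; omega
        · intro a ha; simp at ha; show a + 1 - 1 = a; omega
        · intro a ha; simp at ha
          show h a * ℓ (a - (x + 1)) = h (a - 1 + 1) * ℓ (a - 1 - x)
          have h1' : a - 1 + 1 = a := by omega
          have h2' : a - 1 - x = a - (x + 1) := by omega
          rw [h1', h2']
      have hS2le : ∑ η ∈ Ioc x (N - 2), h (η + 1) * ℓ (η - x)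
          ≤ ∑ η ∈ Ioc x (N - 2), h η * ℓ (η - x) := by
        apply Finset.sum_le_sum
        intro η hη; simp at hη
        exact mul_le_mul_of_nonneg_right (ihy η hη.1 hη.2) (hl0 _)
      -- R split
      have hR : ∑ ξ ∈ Ioc (x + 1) (N - 1), ℓ ξ
          = ℓ (x + 2) + ∑ ξ ∈ Ioc (x + 2) (N - 1), ℓ ξ := by
        have hsplit := Finset.sum_Ioc_consecutive ℓ (show x + 1 ≤ x + 2 by omega)
          (show x + 2 ≤ N - 1 by omega)
        have hsing : Ioc (x + 1) (x + 2) = {x + 2} := by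
          ext a; simp only [mem_Ioc, mem_singleton]; omega
        rw [hsing, Finset.sum_singleton] at hsplit
        linarith
      have hA : (0:ℝ) ≤ ∑ ξ ∈ Ioc (x + 2) (N - 1), ℓ ξ :=
        Finset.sum_nonneg fun i _ => hl0 i
      have hhx1 : 0 ≤ h (x + 1) := hpos (x + 1) (by simp; omega)
      have hhx2le : h (x + 2) ≤ h (x + 1) := ihy (x + 1) (by omega) (by omega)
      have hB : h (x + 2) * (∑ ξ ∈ Ioc (x + 2) (N - 1), ℓ ξ)
          ≤ h (x + 1) * (∑ ξ ∈ Ioc (x + 1) (N - 1), ℓ ξ) := by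
        rw [hR, mul_add]
        have h1' := mul_le_mul_of_nonneg_right hhx2le hA
        nlinarith [mul_nonneg hhx1 (hl0 (x + 2))]
      have hterm : 0 ≤ h (N - 1) * ℓ (N - 1 - x) := mul_nonneg hhN.le (hl0 _)
      rw [hS1] at e1
      rw [hS2] at e2
      linarith

end Aux2

/-- Main theorem: for `N = 2^k`, `k ≥ 4`, if each vertex of the directed `N`-cycle
independently has one shortcut drawn from a balanced distribution `ℓ`
(`ℓ x = h x / τ`, `h` the hitting probabilities), then the expected greedy routing
time `τ = ∑ h x` satisfies `τ ≤ 3 k²`. -/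
theorem greedy_routing_bound (k N : ℕ) (hk : 4 ≤ k) (hN : N = 2 ^ k)
    (ℓ h : ℕ → ℝ)
    (hl0 : ∀ x, 0 ≤ ℓ x) (hsupp : ∀ x, x ∉ Icc 1 (N - 1) → ℓ x = 0)
    (hsum : ∑ x ∈ Icc 1 (N - 1), ℓ x = 1)
    (hbe : BackEq N ℓ h)
    (hbal : ∀ x ∈ Icc 1 (N - 1), ℓ x = h x / ∑ ξ ∈ Icc 1 (N - 1), h ξ) :
    ∑ x ∈ Icc 1 (N - 1), h x ≤ 3 * (k : ℝ) ^ 2 := by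
  have hN16 : 16 ≤ N := by
    rw [hN]
    calc (16:ℕ) = 2 ^ 4 := by norm_num
    _ ≤ 2 ^ k := Nat.pow_le_pow_right (by norm_num) hk
  have hτ0 : 0 < ∑ ξ ∈ Icc 1 (N - 1), h ξ := tau_pos hN16 hl0 hsum hbe hbal
  set τ := ∑ ξ ∈ Icc 1 (N - 1), h ξ with hτdef
  have hτne : τ ≠ 0 := ne_of_gt hτ0
  have hNR : (1:ℝ) ≤ (N:ℝ) - 1 := by
    have : (16:ℝ) ≤ (N:ℝ) := by exact_mod_cast hN16
    linarith
  -- nonnegativity of h on the range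
  have hpos : ∀ x ∈ Icc 1 (N - 1), 0 ≤ h x := by
    intro x hx
    have hb := hbal x hx
    have hx' : h x = ℓ x * τ := by rw [hb]; field_simp
    rw [hx']
    exact mul_nonneg (hl0 x) hτ0.le
  -- monotonicity
  have hstep := h_step hN16 hl0 hbe hpos
  have hanti : ∀ a b, 1 ≤ a → a ≤ b → b ≤ N - 1 → h b ≤ h a := by
    intro a b ha hab hb
    obtain ⟨d, rfl⟩ : ∃ d, b = a + d := ⟨b - a, by omega⟩
    clear hab
    induction d with
    | zero => simp
    | succ d ihd =>
      have h2 := ihd (by omega)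
      have h3 := hstep (a + d) (by omega) (by omega)
      have he : a + (d + 1) = (a + d) + 1 := by omega
      rw [he]
      linarith
  have hlanti : ∀ a b, 1 ≤ a → a ≤ b → b ≤ N - 1 → ℓ b ≤ ℓ a := by
    intro a b ha hab hb
    rw [hbal a (by simp; omega), hbal b (by simp; omega)]
    have := hanti a b ha hab hb
    gcongr
  -- key block inequality
  have hblock : ∀ m : ℕ, 1 ≤ m → 2 * m ≤ N →
      (∑ ξ ∈ Ioc (m - 1) (2 * m - 1), h ξ) ^ 2 ≤ τ := by
    intro m hm1 hm2
    have hmN2 : m ≤ N - 2 := by omega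
    set M := ∑ ξ ∈ Ioc (m - 1) (2 * m - 1), h ξ with hM
    -- sum the backward equations over x ∈ [m, N-2]
    have hsumEq : ∑ x ∈ Icc m (N - 2), h x
        = (∑ x ∈ Icc m (N - 2), ∑ ξ ∈ Ioc x (N - 1), h ξ * ℓ (ξ - x))
          + (∑ x ∈ Icc m (N - 2), h (x + 1) * (∑ ξ ∈ Ioc (x + 1) (N - 1), ℓ ξ))
          + ((N - 1 - m : ℕ) : ℝ) * (1 / ((N:ℝ) - 1)) := by
      have hc : ∀ x ∈ Icc m (N - 2),
          h x = (∑ ξ ∈ Ioc x (N - 1), h ξ * ℓ (ξ - x))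
            + h (x + 1) * (∑ ξ ∈ Ioc (x + 1) (N - 1), ℓ ξ) + 1 / ((N:ℝ) - 1) := by
        intro x hx; simp only [mem_Icc] at hx
        exact hbe.2 x (by omega) (by omega)
      rw [Finset.sum_congr rfl hc, Finset.sum_add_distrib, Finset.sum_add_distrib,
        Finset.sum_const, Nat.card_Icc]
      have he : N - 2 + 1 - m = N - 1 - m := by omega
      rw [he, nsmul_eq_mul]
    -- swap the double sum
    have hswap : ∑ x ∈ Icc m (N - 2), ∑ ξ ∈ Ioc x (N - 1), h ξ * ℓ (ξ - x)
        = ∑ ξ ∈ Ioc m (N - 1), ∑ x ∈ Icc m (ξ - 1), h ξ * ℓ (ξ - x) := by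
      apply Finset.sum_comm'
      intro x ξ; simp only [mem_Icc, mem_Ioc]; omega
    -- inner reindex
    have hinner : ∀ ξ ∈ Ioc m (N - 1), ∑ x ∈ Icc m (ξ - 1), h ξ * ℓ (ξ - x)
        = h ξ * ∑ d ∈ Ioc 0 (ξ - m), ℓ d := by
      intro ξ hξ; simp only [mem_Ioc] at hξ
      rw [Finset.mul_sum]
      refine Finset.sum_nbij' (fun x => ξ - x) (fun d => ξ - d) ?_ ?_ ?_ ?_ ?_
      · intro a ha; simp only [mem_Icc] at ha; simp only [mem_Ioc]; omega
      · intro a ha; simp only [mem_Ioc] at ha; simp only [mem_Icc]; omega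
      · intro a ha; simp only [mem_Icc] at ha; show ξ - (ξ - a) = a; omega
      · intro a ha; simp only [mem_Ioc] at ha; show ξ - (ξ - a) = a; omega
      · intro a ha; rfl
    -- second sum reindex
    have hsecond : ∑ x ∈ Icc m (N - 2), h (x + 1) * (∑ ξ ∈ Ioc (x + 1) (N - 1), ℓ ξ)
        = ∑ ξ ∈ Ioc m (N - 1), h ξ * (∑ d ∈ Ioc ξ (N - 1), ℓ d) := by
      refine Finset.sum_nbij' (fun x => x + 1) (fun ξ => ξ - 1) ?_ ?_ ?_ ?_ ?_
      · intro a ha; simp only [mem_Icc] at ha; simp only [mem_Ioc]; omega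
      · intro a ha; simp only [mem_Ioc] at ha; simp only [mem_Icc]; omega
      · intro a ha; simp only [mem_Icc] at ha; show a + 1 - 1 = a; omega
      · intro a ha; simp only [mem_Ioc] at ha; show a - 1 + 1 = a; omega
      · intro a ha; rfl
    -- decomposition of total ℓ mass
    have hone : ∀ ξ ∈ Ioc m (N - 1),
        (∑ d ∈ Ioc 0 (ξ - m), ℓ d) + (∑ d ∈ Ioc ξ (N - 1), ℓ d)
          = 1 - ∑ d ∈ Ioc (ξ - m) ξ, ℓ d := by
      intro ξ hξ; simp only [mem_Ioc] at hξ
      have h1 := Finset.sum_Ioc_consecutive ℓ (show 0 ≤ ξ - m by omega)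
        (show ξ - m ≤ ξ by omega)
      have h2 := Finset.sum_Ioc_consecutive ℓ (show 0 ≤ ξ by omega)
        (show ξ ≤ N - 1 by omega)
      have h3 : Ioc 0 (N - 1) = Icc 1 (N - 1) := by
        ext a; simp only [mem_Ioc, mem_Icc]; omega
      rw [h3, hsum] at h2
      linarith
    -- combine to the key identity
    have hE2 : (∑ ξ ∈ Ioc m (N - 1), h ξ * ∑ d ∈ Ioc 0 (ξ - m), ℓ d)
        + (∑ ξ ∈ Ioc m (N - 1), h ξ * ∑ d ∈ Ioc ξ (N - 1), ℓ d)
        = (∑ ξ ∈ Ioc m (N - 1), h ξ)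
          - ∑ ξ ∈ Ioc m (N - 1), h ξ * ∑ d ∈ Ioc (ξ - m) ξ, ℓ d := by
      rw [← Finset.sum_add_distrib, ← Finset.sum_sub_distrib]
      apply Finset.sum_congr rfl
      intro ξ hξ
      rw [← mul_add, hone ξ hξ]
      ring
    have hE3 : ∑ ξ ∈ Ioc m (N - 1), h ξ
        = (∑ x ∈ Icc m (N - 2), h x) - h m + h (N - 1) := by
      have e1 := Finset.sum_Ioc_consecutive h (show m - 1 ≤ m by omega)
        (show m ≤ N - 1 by omega)
      have e2 : Ioc (m - 1) m = {m} := by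
        ext a; simp only [mem_Ioc, mem_singleton]; omega
      rw [e2, Finset.sum_singleton] at e1
      have e3 := Finset.sum_Ioc_consecutive h (show m - 1 ≤ N - 2 by omega)
        (show N - 2 ≤ N - 1 by omega)
      have e4 : Ioc (N - 2) (N - 1) = {N - 1} := by
        ext a; simp only [mem_Ioc, mem_singleton]; omega
      rw [e4, Finset.sum_singleton] at e3
      have e5 : Icc m (N - 2) = Ioc (m - 1) (N - 2) := by
        ext a; simp only [mem_Icc, mem_Ioc]; omega
      rw [e5]
      linarith
    have hkey : h m + (∑ ξ ∈ Ioc m (N - 1), h ξ * ∑ d ∈ Ioc (ξ - m) ξ, ℓ d)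
        = ((N - m : ℕ) : ℝ) * (1 / ((N:ℝ) - 1)) := by
      have hw : ∑ x ∈ Icc m (N - 2), ∑ ξ ∈ Ioc x (N - 1), h ξ * ℓ (ξ - x)
          = ∑ ξ ∈ Ioc m (N - 1), h ξ * ∑ d ∈ Ioc 0 (ξ - m), ℓ d := by
        rw [hswap]; exact Finset.sum_congr rfl hinner
      have hhn : h (N - 1) = 1 / ((N:ℝ) - 1) := hbe.1
      have hcast1 : ((N - 1 - m : ℕ) : ℝ) = (N:ℝ) - 1 - m := by
        have : (m : ℝ) + ((N - 1 - m : ℕ) : ℝ) = ((N - 1 : ℕ) : ℝ) := by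
          exact_mod_cast congrArg (Nat.cast : ℕ → ℝ) (by omega : m + (N - 1 - m) = N - 1)
        have h2 : ((N - 1 : ℕ) : ℝ) = (N:ℝ) - 1 := by
          have : (1:ℕ) ≤ N := by omega
          push_cast [this]; ring
        linarith
      have hcast2 : ((N - m : ℕ) : ℝ) = (N:ℝ) - m := by
        have : (m : ℝ) + ((N - m : ℕ) : ℝ) = ((N : ℕ) : ℝ) := by
          exact_mod_cast congrArg (Nat.cast : ℕ → ℝ) (by omega : m + (N - m) = N)
        linarith
      rw [hw, hsecond] at hsumEq
      rw [hcast2]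
      rw [hcast1] at hsumEq
      have := hE2
      have := hE3
      -- combine linearly
      nlinarith [hsumEq, hE2, hE3, hhn]
    -- now the window bound
    have hsub : (∑ ξ ∈ Ioc m (2 * m - 1), h ξ * ∑ d ∈ Ioc (ξ - m) ξ, ℓ d)
        ≤ ∑ ξ ∈ Ioc m (N - 1), h ξ * ∑ d ∈ Ioc (ξ - m) ξ, ℓ d := by
      apply Finset.sum_le_sum_of_subset_of_nonneg
      · intro a ha; simp only [mem_Ioc] at ha ⊢; omega
      · intro i hi _
        simp only [mem_Ioc] at hi
        exact mul_nonneg (hpos i (by simp only [mem_Icc]; omega))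
          (Finset.sum_nonneg fun j _ => hl0 j)
    have hL : ∀ ξ ∈ Ioc m (2 * m - 1),
        (∑ d ∈ Ioc (m - 1) (2 * m - 1), ℓ d) ≤ ∑ d ∈ Ioc (ξ - m) ξ, ℓ d := by
      intro ξ hξ; simp only [mem_Ioc] at hξ
      have e1 : ∑ d ∈ Ioc (m - 1) (2 * m - 1), ℓ d = ∑ j ∈ Ioc 0 m, ℓ (m - 1 + j) := by
        refine Finset.sum_nbij' (fun d => d - (m - 1)) (fun j => m - 1 + j) ?_ ?_ ?_ ?_ ?_
        · intro a ha; simp only [mem_Ioc] at ha ⊢; omega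
        · intro a ha; simp only [mem_Ioc] at ha ⊢; omega
        · intro a ha; simp only [mem_Ioc] at ha; show m - 1 + (a - (m - 1)) = a; omega
        · intro a ha; simp only [mem_Ioc] at ha; show m - 1 + a - (m - 1) = a; omega
        · intro a ha; simp only [mem_Ioc] at ha
          show ℓ a = ℓ (m - 1 + (a - (m - 1)))
          congr 1; omega
      have e2 : ∑ d ∈ Ioc (ξ - m) ξ, ℓ d = ∑ j ∈ Ioc 0 m, ℓ (ξ - m + j) := by
        refine Finset.sum_nbij' (fun d => d - (ξ - m)) (fun j => ξ - m + j) ?_ ?_ ?_ ?_ ?_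
        · intro a ha; simp only [mem_Ioc] at ha ⊢; omega
        · intro a ha; simp only [mem_Ioc] at ha ⊢; omega
        · intro a ha; simp only [mem_Ioc] at ha; show ξ - m + (a - (ξ - m)) = a; omega
        · intro a ha; simp only [mem_Ioc] at ha; show ξ - m + a - (ξ - m) = a; omega
        · intro a ha; simp only [mem_Ioc] at ha
          show ℓ a = ℓ (ξ - m + (a - (ξ - m)))
          congr 1; omega
      rw [e1, e2]
      apply Finset.sum_le_sum
      intro j hj; simp only [mem_Ioc] at hj
      exact hlanti (ξ - m + j) (m - 1 + j) (by omega) (by omega) (by omega)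
    have hLM : ∑ d ∈ Ioc (m - 1) (2 * m - 1), ℓ d = M / τ := by
      rw [hM, Finset.sum_div]
      apply Finset.sum_congr rfl
      intro d hd; simp only [mem_Ioc] at hd
      exact hbal d (by simp only [mem_Icc]; omega)
    have hL1 : ∑ d ∈ Ioc (m - 1) (2 * m - 1), ℓ d ≤ 1 := by
      rw [← hsum]
      apply Finset.sum_le_sum_of_subset_of_nonneg
      · intro a ha; simp only [mem_Ioc] at ha; simp only [mem_Icc]; omega
      · intro i _ _; exact hl0 i
    have hMsplit : M = h m + ∑ ξ ∈ Ioc m (2 * m - 1), h ξ := by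
      have e := Finset.sum_Ioc_consecutive h (show m - 1 ≤ m by omega)
        (show m ≤ 2 * m - 1 by omega)
      have e2 : Ioc (m - 1) m = {m} := by
        ext a; simp only [mem_Ioc, mem_singleton]; omega
      rw [e2, Finset.sum_singleton] at e
      rw [hM, ← e]
    have hNmu : ((N - m : ℕ) : ℝ) * (1 / ((N:ℝ) - 1)) ≤ 1 := by
      have hc : ((N - m : ℕ) : ℝ) ≤ (N:ℝ) - 1 := by
        have : ((N - m : ℕ) : ℝ) ≤ ((N - 1 : ℕ) : ℝ) := by
          exact_mod_cast Nat.sub_le_sub_left hm1 N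
        have h2 : ((N - 1 : ℕ) : ℝ) = (N:ℝ) - 1 := by
          have : (1:ℕ) ≤ N := by omega
          push_cast [this]; ring
        linarith
      rw [div_eq_mul_inv, one_mul]
      calc ((N - m : ℕ) : ℝ) * ((N:ℝ) - 1)⁻¹ ≤ ((N:ℝ) - 1) * ((N:ℝ) - 1)⁻¹ := by
            apply mul_le_mul_of_nonneg_right hc
            positivity
        _ = 1 := by field_simp
    have hhm : 0 ≤ h m := hpos m (by simp only [mem_Icc]; omega)
    -- chain of inequalities
    have t1 : h m * (∑ d ∈ Ioc (m - 1) (2 * m - 1), ℓ d) ≤ h m := by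
      calc h m * (∑ d ∈ Ioc (m - 1) (2 * m - 1), ℓ d) ≤ h m * 1 :=
            mul_le_mul_of_nonneg_left hL1 hhm
        _ = h m := mul_one _
    have t2 : ∑ ξ ∈ Ioc m (2 * m - 1), h ξ * (∑ d ∈ Ioc (m - 1) (2 * m - 1), ℓ d)
        ≤ ∑ ξ ∈ Ioc m (2 * m - 1), h ξ * ∑ d ∈ Ioc (ξ - m) ξ, ℓ d := by
      apply Finset.sum_le_sum
      intro ξ hξ
      have hξ' := hξ; simp only [mem_Ioc] at hξ'
      exact mul_le_mul_of_nonneg_left (hL ξ hξ)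
        (hpos ξ (by simp only [mem_Icc]; omega))
    have hmain : M * (∑ d ∈ Ioc (m - 1) (2 * m - 1), ℓ d) ≤ 1 := by
      calc M * (∑ d ∈ Ioc (m - 1) (2 * m - 1), ℓ d)
          = h m * (∑ d ∈ Ioc (m - 1) (2 * m - 1), ℓ d)
            + ∑ ξ ∈ Ioc m (2 * m - 1), h ξ * (∑ d ∈ Ioc (m - 1) (2 * m - 1), ℓ d) := by
            rw [hMsplit, add_mul, Finset.sum_mul]
        _ ≤ h m + ∑ ξ ∈ Ioc m (N - 1), h ξ * ∑ d ∈ Ioc (ξ - m) ξ, ℓ d := by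
            linarith [t1, t2, hsub]
        _ = ((N - m : ℕ) : ℝ) * (1 / ((N:ℝ) - 1)) := hkey
        _ ≤ 1 := hNmu
    have hMM : M * M / τ ≤ 1 := by
      rw [mul_div_assoc, ← hLM]
      exact hmain
    have hMMτ : M * M ≤ τ := (div_le_one hτ0).mp hMM
    rw [pow_two]
    exact hMMτ
  -- split τ into dyadic blocks
  have hτsplit : τ = ∑ i ∈ range k, ∑ ξ ∈ Ioc (2 ^ i - 1) (2 ^ (i + 1) - 1), h ξ := by
    have hIcc : Icc 1 (N - 1) = Ioc 0 (2 ^ k - 1) := by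
      rw [hN]; ext a; simp only [mem_Icc, mem_Ioc]; omega
    rw [hτdef, hIcc]
    have H : ∀ j, j ≤ k → ∑ ξ ∈ Ioc 0 (2 ^ j - 1), h ξ
        = ∑ i ∈ range j, ∑ ξ ∈ Ioc (2 ^ i - 1) (2 ^ (i + 1) - 1), h ξ := by
      intro j
      induction j with
      | zero => intro _; simp
      | succ j ihj =>
        intro hj
        have hmono : (2:ℕ) ^ j ≤ 2 ^ (j + 1) := Nat.pow_le_pow_right (by norm_num) (Nat.le_succ j)
        have e := Finset.sum_Ioc_consecutive h (show 0 ≤ 2 ^ j - 1 by omega)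
          (show 2 ^ j - 1 ≤ 2 ^ (j + 1) - 1 by omega)
        rw [Finset.sum_range_succ, ← ihj (by omega), ← e]
    exact H k le_rfl
  have hblocki : ∀ i ∈ range k,
      ∑ ξ ∈ Ioc (2 ^ i - 1) (2 ^ (i + 1) - 1), h ξ ≤ Real.sqrt τ := by
    intro i hi
    simp only [mem_range] at hi
    have h2m : 2 * 2 ^ i ≤ N := by
      rw [hN]
      calc 2 * 2 ^ i = 2 ^ (i + 1) := by ring
        _ ≤ 2 ^ k := Nat.pow_le_pow_right (by norm_num) (by omega)
    have hbi := hblock (2 ^ i) Nat.one_le_two_pow h2m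
    have hpowe : 2 ^ (i + 1) = 2 * 2 ^ i := by ring
    rw [hpowe]
    have h1le : (1:ℕ) ≤ 2 ^ i := Nat.one_le_two_pow
    have hMnn : 0 ≤ ∑ ξ ∈ Ioc (2 ^ i - 1) (2 * 2 ^ i - 1), h ξ := by
      apply Finset.sum_nonneg
      intro ξ hξ; simp only [mem_Ioc] at hξ
      exact hpos ξ (by simp only [mem_Icc]; omega)
    exact (Real.le_sqrt hMnn hτ0.le).mpr hbi
  have hfin : τ ≤ (k:ℝ) * Real.sqrt τ := by
    calc τ = ∑ i ∈ range k, ∑ ξ ∈ Ioc (2 ^ i - 1) (2 ^ (i + 1) - 1), h ξ := hτsplit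
      _
        ≤ ∑ _i ∈ range k, Real.sqrt τ := Finset.sum_le_sum hblocki
      _ = (k:ℝ) * Real.sqrt τ := by rw [Finset.sum_const, card_range, nsmul_eq_mul]
  have hks : (4:ℝ) ≤ (k:ℝ) := by exact_mod_cast hk
  nlinarith [Real.sq_sqrt hτ0.le, Real.sqrt_nonneg τ, sq_nonneg (Real.sqrt τ - (k:ℝ)), hfin]
end
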